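/- arXiv:2410.23801 — 3 statements merged into one kernel-verified Lean document; each statement's English description precedes it below -/
import Mathlib

section
/- Let f be a bounded continuous function on ℝⁿ₊ × ℝ, and for (Y, s) ∈ ℝⁿ₊ × ℝ set F(Y, s) := sup_{r>0} (1/(2r)) ∫_{s-r}^{s+r} |f(Y, σ)| dσ (the Hardy–Littlewood maximal function of f in the time variable). Then for every a > 0 and every (x, t) ∈ ℝ^{n-1} × ℝ, N_a(F)(x, t) ≤ N_{2a}(f)(x, t) + 2 sup_{r>0} (1/(4r)) ∫_{t-2r}^{t+2r} N_a(f)(x, σ) dσ. -/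
open MeasureTheory Set

/-- The parabolic cone with vertex `(x, t)` and aperture `a`:
`Γ_a(x,t) = {(y, yₙ, s) : yₙ > 0, |y - x| + |s - t|^{1/2} ≤ a yₙ}`. -/
def paraCone (m : ℕ) (a : ℝ) (x : EuclideanSpace ℝ (Fin m)) (t : ℝ) :
    Set (EuclideanSpace ℝ (Fin m) × ℝ × ℝ) :=
  {p | 0 < p.2.1 ∧ ‖p.1 - x‖ + |p.2.2 - t| ^ ((1 : ℝ) / 2) ≤ a * p.2.1}

/-- The nontangential maximal function `N_a(g)(x,t) = sup_{(Y,s) ∈ Γ_a(x,t)} |g(Y,s)|`. -/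
noncomputable def ntMax (m : ℕ) (a : ℝ) (g : EuclideanSpace ℝ (Fin m) × ℝ × ℝ → ℝ)
    (x : EuclideanSpace ℝ (Fin m)) (t : ℝ) : ℝ :=
  ⨆ p ∈ paraCone m a x t, |g p|

/-- The Hardy–Littlewood maximal function of `f` in the time variable:
`F(Y,s) = sup_{r>0} (1/(2r)) ∫_{s-r}^{s+r} |f(Y,σ)| dσ`. -/
noncomputable def timeMax (m : ℕ) (f : EuclideanSpace ℝ (Fin m) × ℝ × ℝ → ℝ)
    (p : EuclideanSpace ℝ (Fin m) × ℝ × ℝ) : ℝ :=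
  ⨆ r : {r : ℝ // 0 < r},
    (1 / (2 * (r : ℝ))) * ∫ σ in Icc (p.2.2 - (r : ℝ)) (p.2.2 + (r : ℝ)), |f (p.1, p.2.1, σ)|

/-!
For `(y, yₙ, s) ∈ Γ_a(x, t)` split the radii of the time average at the parabolic scale `(a yₙ)²`.
For `r ≤ (a yₙ)²` the whole segment `{(y, yₙ, σ) : |σ - s| ≤ r}` lies in the wider cone
`Γ_{2a}(x, t)`, so the average is at most `N_{2a}(f)(x, t)`. For `r > (a yₙ)²` we have
`|s - t| ≤ (a yₙ)² < r`, so `[s - r, s + r] ⊆ [t - 2r, t + 2r]`, while `(y, yₙ, σ) ∈ Γ_a(x, σ)`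
gives `|f(y, yₙ, σ)| ≤ N_a(f)(x, σ)`; the average is then at most twice the average of
`N_a(f)(x, ·)` over `[t - 2r, t + 2r]`. Continuity of `f` makes `σ ↦ N_a(f)(x, σ)` lower
semicontinuous, hence integrable on bounded intervals.
-/

open Filter

section RealBiSup

variable {α : Type*} {S : Set α} {g : α → ℝ}

lemma Real.biSup_le {B : ℝ} (h : ∀ p ∈ S, g p ≤ B) (hB : 0 ≤ B) : ⨆ p ∈ S, g p ≤ B :=
  Real.iSup_le (fun p => Real.iSup_le (h p) hB) hB

lemma Real.biSup_nonneg (h : ∀ p ∈ S, 0 ≤ g p) : 0 ≤ ⨆ p ∈ S, g p :=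
  Real.iSup_nonneg fun p => Real.iSup_nonneg (h p)

lemma Real.le_biSup {B : ℝ} (hB : ∀ q ∈ S, g q ≤ B) {p : α} (hp : p ∈ S) :
    g p ≤ ⨆ q ∈ S, g q :=
  le_ciSup₂ (f := fun q (_ : q ∈ S) => g q)
    ⟨B, by rintro _ ⟨_, ⟨q, rfl⟩, hq, rfl⟩; exact hB q hq⟩ p hp

lemma Real.exists_mem_lt_of_lt_biSup {c : ℝ} (hc : 0 ≤ c) (h : c < ⨆ p ∈ S, g p) :
    ∃ p ∈ S, c < g p := by
  by_contra! hle
  exact (Real.biSup_le hle hc).not_gt h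

end RealBiSup

section IntervalAverage

noncomputable def intervalAverage (g : ℝ → ℝ) (c r : ℝ) : ℝ :=
  1 / (2 * r) * ∫ σ in Icc (c - r) (c + r), g σ

variable {g G : ℝ → ℝ} {c r s t C : ℝ}

lemma intervalAverage_nonneg (hg : ∀ σ, 0 ≤ g σ) (hr : 0 ≤ r) : 0 ≤ intervalAverage g c r :=
  mul_nonneg (by positivity) (integral_nonneg hg)

lemma iSup_intervalAverage_two_mul_nonneg (hg : ∀ σ, 0 ≤ g σ) :
    0 ≤ ⨆ r : {r : ℝ // 0 < r}, intervalAverage g c (2 * r) :=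
  Real.iSup_nonneg fun r => intervalAverage_nonneg hg (by linarith [r.2])

lemma intervalAverage_le (hr : 0 < r) (hg : ∀ σ ∈ Icc (c - r) (c + r), |g σ| ≤ C) :
    intervalAverage g c r ≤ C := by
  have hint : |∫ σ in Icc (c - r) (c + r), g σ| ≤ C * (2 * r) := by
    have := norm_setIntegral_le_of_norm_le_const (measure_Icc_lt_top (μ := volume))
      fun σ hσ => (Real.norm_eq_abs _).trans_le (hg σ hσ)
    rwa [Real.volume_real_Icc_of_le (by linarith), show c + r - (c - r) = 2 * r by ring] at this
  calc intervalAverage g c r ≤ 1 / (2 * r) * |∫ σ in Icc (c - r) (c + r), g σ| := by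
        unfold intervalAverage; gcongr; exact le_abs_self _
    _ ≤ 1 / (2 * r) * (C * (2 * r)) := by gcongr
    _ = C := by field_simp

lemma intervalAverage_le_two_mul (hr : 0 < r) (hst : |s - t| ≤ r)
    (hg : IntegrableOn g (Icc (s - r) (s + r))) (hG : IntegrableOn G (Icc (t - 2 * r) (t + 2 * r)))
    (hgG : ∀ σ ∈ Icc (s - r) (s + r), g σ ≤ G σ) (hG0 : ∀ σ, 0 ≤ G σ) :
    intervalAverage g s r ≤ 2 * intervalAverage G t (2 * r) := by
  have hsub : Icc (s - r) (s + r) ⊆ Icc (t - 2 * r) (t + 2 * r) := by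
    obtain ⟨h₁, h₂⟩ := abs_le.mp hst
    exact Icc_subset_Icc (by linarith) (by linarith)
  have hint : ∫ σ in Icc (s - r) (s + r), g σ ≤ ∫ σ in Icc (t - 2 * r) (t + 2 * r), G σ :=
    (setIntegral_mono_on hg (hG.mono_set hsub) measurableSet_Icc hgG).trans
      (setIntegral_mono_set hG (ae_of_all _ hG0) hsub.eventuallyLE)
  calc intervalAverage g s r ≤ 1 / (2 * r) * ∫ σ in Icc (t - 2 * r) (t + 2 * r), G σ := by
        unfold intervalAverage; gcongr
    _ = 2 * intervalAverage G t (2 * r) := by unfold intervalAverage; field_simp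

end IntervalAverage

section ParabolicCone

variable {m : ℕ} {a : ℝ} {x : EuclideanSpace ℝ (Fin m)} {t : ℝ}
  {p : EuclideanSpace ℝ (Fin m) × ℝ × ℝ}

lemma mem_paraCone_shift (hp : p ∈ paraCone m a x t) (σ : ℝ) :
    (p.1, p.2.1, p.2.2 + (σ - t)) ∈ paraCone m a x σ :=
  ⟨hp.1, by simpa only [show p.2.2 + (σ - t) - σ = p.2.2 - t by ring] using hp.2⟩

lemma mem_paraCone_at_time (hp : p ∈ paraCone m a x t) (σ : ℝ) :
    (p.1, p.2.1, σ) ∈ paraCone m a x σ := by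
  refine ⟨hp.1, ?_⟩
  have hcone := hp.2
  have hroot : 0 ≤ |p.2.2 - t| ^ ((1 : ℝ) / 2) := by positivity
  simp only [sub_self, abs_zero, Real.zero_rpow one_half_pos.ne', add_zero]
  linarith

lemma sqrt_abs_sub_le_of_mem_paraCone (hp : p ∈ paraCone m a x t) :
    √|p.2.2 - t| ≤ a * p.2.1 := by
  have hcone := hp.2
  rw [← Real.sqrt_eq_rpow] at hcone
  linarith [norm_nonneg (p.1 - x)]

lemma abs_sub_le_sq_of_mem_paraCone (hp : p ∈ paraCone m a x t) : |p.2.2 - t| ≤ (a * p.2.1) ^ 2 :=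
  (Real.sqrt_le_left ((Real.sqrt_nonneg _).trans (sqrt_abs_sub_le_of_mem_paraCone hp))).mp
    (sqrt_abs_sub_le_of_mem_paraCone hp)

-- `|σ - t|^{1/2} ≤ |σ - s|^{1/2} + |s - t|^{1/2}`, and each term is at most `a yₙ`.
lemma mem_paraCone_two_mul (hp : p ∈ paraCone m a x t) {σ : ℝ}
    (hσ : |σ - p.2.2| ≤ (a * p.2.1) ^ 2) : (p.1, p.2.1, σ) ∈ paraCone m (2 * a) x t := by
  refine ⟨hp.1, ?_⟩
  have hcone := hp.2
  have hscale : 0 ≤ a * p.2.1 := (Real.sqrt_nonneg _).trans (sqrt_abs_sub_le_of_mem_paraCone hp)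
  have hσ' : √|σ - p.2.2| ≤ a * p.2.1 := Real.sqrt_le_left hscale |>.mpr hσ
  have htri : √|σ - t| ≤ √|σ - p.2.2| + √|p.2.2 - t| := by
    simp only [Real.sqrt_eq_rpow]
    exact (Real.rpow_le_rpow (abs_nonneg _) (abs_sub_le _ _ _) (by norm_num)).trans
      (Real.rpow_add_le_add_rpow (abs_nonneg _) (abs_nonneg _) (by norm_num) (by norm_num))
  rw [← Real.sqrt_eq_rpow] at hcone ⊢
  dsimp only
  linarith

end ParabolicCone

section NontangentialMaximalFunction

variable {m : ℕ} {a : ℝ} {x : EuclideanSpace ℝ (Fin m)} {t : ℝ}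
  {g : EuclideanSpace ℝ (Fin m) × ℝ × ℝ → ℝ} {B : ℝ}

lemma ntMax_nonneg : 0 ≤ ntMax m a g x t :=
  Real.biSup_nonneg fun p _ => abs_nonneg (g p)

lemma ntMax_le (h : ∀ p ∈ paraCone m a x t, |g p| ≤ B) (hB : 0 ≤ B) : ntMax m a g x t ≤ B :=
  Real.biSup_le h hB

lemma abs_le_ntMax (hg : ∀ p : EuclideanSpace ℝ (Fin m) × ℝ × ℝ, 0 < p.2.1 → |g p| ≤ B)
    {p : EuclideanSpace ℝ (Fin m) × ℝ × ℝ} (hp : p ∈ paraCone m a x t) :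
    |g p| ≤ ntMax m a g x t :=
  Real.le_biSup (fun q hq => hg q hq.1) hp

variable (hg_cont : ContinuousOn g {p | 0 < p.2.1})
  (hg_bd : ∀ p : EuclideanSpace ℝ (Fin m) × ℝ × ℝ, 0 < p.2.1 → |g p| ≤ B)
include hg_cont hg_bd

-- `ntMax m a g x` dominates `σ ↦ |g (y, yₙ, s + (σ - σ₀))|` for each `(y, yₙ, s) ∈ Γ_a(x, σ₀)`,
-- and these functions are continuous.
lemma lowerSemicontinuous_ntMax : LowerSemicontinuous (ntMax m a g x) := by
  intro σ₀ c hc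
  rcases lt_or_ge c 0 with hc0 | hc0
  · exact Eventually.of_forall fun σ => hc0.trans_le ntMax_nonneg
  obtain ⟨p, hp, hcp⟩ := Real.exists_mem_lt_of_lt_biSup hc0 hc
  have hg_at : ContinuousAt g p :=
    hg_cont.continuousAt ((isOpen_lt continuous_const continuous_snd.fst).mem_nhds hp.1)
  have hshift : ContinuousAt (fun σ : ℝ => |g (p.1, p.2.1, p.2.2 + (σ - σ₀))|) σ₀ :=
    (hg_at.comp_of_eq (by fun_prop) (by simp)).abs
  filter_upwards [hshift.eventually (lt_mem_nhds (by simpa using hcp))] with σ hσ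
  exact hσ.trans_le (abs_le_ntMax hg_bd (mem_paraCone_shift hp σ))

lemma integrableOn_ntMax {s : Set ℝ} (hs : volume s ≠ ⊤) : IntegrableOn (ntMax m a g x) s := by
  have hB : 0 ≤ B := (abs_nonneg _).trans (hg_bd (0, 1, 0) one_pos)
  refine Measure.integrableOn_of_bounded hs
    (lowerSemicontinuous_ntMax hg_cont hg_bd).measurable.aestronglyMeasurable (M := B)
    (ae_of_all _ fun σ => ?_)
  rw [Real.norm_of_nonneg ntMax_nonneg]
  exact ntMax_le (fun p hp => hg_bd p hp.1) hB

end NontangentialMaximalFunction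

section TimeMaximalFunction

variable {m : ℕ} {f : EuclideanSpace ℝ (Fin m) × ℝ × ℝ → ℝ}

lemma timeMax_nonneg (p : EuclideanSpace ℝ (Fin m) × ℝ × ℝ) : 0 ≤ timeMax m f p :=
  Real.iSup_nonneg fun r => intervalAverage_nonneg (fun _ => abs_nonneg _) r.2.le

lemma timeMax_le_of_mem_paraCone (hf_cont : ContinuousOn f {p | 0 < p.2.1}) {B : ℝ}
    (hf_bd : ∀ p : EuclideanSpace ℝ (Fin m) × ℝ × ℝ, 0 < p.2.1 → |f p| ≤ B) {a : ℝ}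
    {x : EuclideanSpace ℝ (Fin m)} {t : ℝ} {p : EuclideanSpace ℝ (Fin m) × ℝ × ℝ}
    (hp : p ∈ paraCone m a x t) :
    timeMax m f p ≤ ntMax m (2 * a) f x t +
      2 * ⨆ r : {r : ℝ // 0 < r}, intervalAverage (ntMax m a f x) t (2 * r) := by
  have hB : 0 ≤ B := (abs_nonneg _).trans (hf_bd (0, 1, 0) one_pos)
  have hS : BddAbove
      (range fun r : {r : ℝ // 0 < r} => intervalAverage (ntMax m a f x) t (2 * r)) := by
    refine ⟨B, ?_⟩
    rintro _ ⟨r, rfl⟩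
    refine intervalAverage_le (by linarith [r.2]) fun σ _ => ?_
    rw [abs_of_nonneg ntMax_nonneg]
    exact ntMax_le (fun q hq => hf_bd q hq.1) hB
  have hS0 : 0 ≤ ⨆ r : {r : ℝ // 0 < r}, intervalAverage (ntMax m a f x) t (2 * r) :=
    iSup_intervalAverage_two_mul_nonneg fun _ => ntMax_nonneg
  refine Real.iSup_le (fun r => ?_) (add_nonneg ntMax_nonneg (by positivity))
  rcases le_or_gt (r : ℝ) ((a * p.2.1) ^ 2) with hsmall | hlarge
  · calc intervalAverage (fun σ => |f (p.1, p.2.1, σ)|) p.2.2 r ≤ ntMax m (2 * a) f x t := by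
          refine intervalAverage_le r.2 fun σ hσ => (abs_abs _).trans_le (abs_le_ntMax hf_bd ?_)
          refine mem_paraCone_two_mul hp (le_trans ?_ hsmall)
          rw [abs_le]; constructor <;> linarith [hσ.1, hσ.2]
      _ ≤ _ := le_add_of_nonneg_right (by positivity)
  · have hslice : Continuous fun σ => |f (p.1, p.2.1, σ)| :=
      (hf_cont.comp_continuous (continuous_const.prodMk (continuous_const.prodMk continuous_id))
        fun _ => hp.1).abs
    calc intervalAverage (fun σ => |f (p.1, p.2.1, σ)|) p.2.2 r
        ≤ 2 * intervalAverage (ntMax m a f x) t (2 * r) :=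
          intervalAverage_le_two_mul r.2 ((abs_sub_le_sq_of_mem_paraCone hp).trans hlarge.le)
            hslice.integrableOn_Icc (integrableOn_ntMax hf_cont hf_bd measure_Icc_lt_top.ne)
            (fun σ _ => abs_le_ntMax hf_bd (mem_paraCone_at_time hp σ)) fun _ => ntMax_nonneg
      _ ≤ 2 * ⨆ r : {r : ℝ // 0 < r}, intervalAverage (ntMax m a f x) t (2 * r) := by
          gcongr; exact le_ciSup hS r
      _ ≤ _ := le_add_of_nonneg_left ntMax_nonneg

end TimeMaximalFunction

theorem stmt2_general (n : ℕ)
    (f : EuclideanSpace ℝ (Fin (n - 1)) × ℝ × ℝ → ℝ)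
    (hf_cont : ContinuousOn f {p | 0 < p.2.1}) (B : ℝ)
    (hf_bd : ∀ p : EuclideanSpace ℝ (Fin (n - 1)) × ℝ × ℝ, 0 < p.2.1 → |f p| ≤ B)
    (a : ℝ) (x : EuclideanSpace ℝ (Fin (n - 1))) (t : ℝ) :
    ntMax (n - 1) a (timeMax (n - 1) f) x t ≤
      ntMax (n - 1) (2 * a) f x t +
        2 * ⨆ r : {r : ℝ // 0 < r},
          (1 / (4 * (r : ℝ))) *
            ∫ σ in Icc (t - 2 * (r : ℝ)) (t + 2 * (r : ℝ)), ntMax (n - 1) a f x σ := by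
  have hdoubled : ∀ r : ℝ, 1 / (4 * r) * ∫ σ in Icc (t - 2 * r) (t + 2 * r), ntMax (n - 1) a f x σ =
      intervalAverage (ntMax (n - 1) a f x) t (2 * r) := fun r => by
    rw [intervalAverage, ← mul_assoc]; norm_num
  simp only [hdoubled]
  refine ntMax_le (fun p hp => ?_)
    (add_nonneg ntMax_nonneg (mul_nonneg zero_le_two
      (iSup_intervalAverage_two_mul_nonneg fun _ => ntMax_nonneg)))
  rw [abs_of_nonneg (timeMax_nonneg p)]
  exact timeMax_le_of_mem_paraCone hf_cont hf_bd hp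

/-- pointwise bound
`N_a(F)(x,t) ≤ N_{2a}(f)(x,t) + 2 sup_{r>0} (1/(4r)) ∫_{t-2r}^{t+2r} N_a(f)(x,σ) dσ`
for `f` bounded and continuous on `ℝⁿ₊ × ℝ` and `F` its maximal function in time. -/
theorem stmt2 (n : ℕ) (hn : 2 ≤ n)
    (f : EuclideanSpace ℝ (Fin (n - 1)) × ℝ × ℝ → ℝ)
    (hf_cont : ContinuousOn f {p | 0 < p.2.1}) (B : ℝ)
    (hf_bd : ∀ p : EuclideanSpace ℝ (Fin (n - 1)) × ℝ × ℝ, 0 < p.2.1 → |f p| ≤ B)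
    (a : ℝ) (ha : 0 < a) (x : EuclideanSpace ℝ (Fin (n - 1))) (t : ℝ) :
    ntMax (n - 1) a (timeMax (n - 1) f) x t ≤
      ntMax (n - 1) (2 * a) f x t +
        2 * ⨆ r : {r : ℝ // 0 < r},
          (1 / (4 * (r : ℝ))) *
            ∫ σ in Icc (t - 2 * (r : ℝ)) (t + 2 * (r : ℝ)), ntMax (n - 1) a f x σ :=
  stmt2_general n f hf_cont B hf_bd a x t
end

section
/- Let p > 1, κ > 0, let f ≥ 0 be a measurable function on ℝⁿ₊ × ℝ, and let g ≥ 0 be a measurable function on ℝⁿ₊ (independent of t). Assume the measure dν = f(X, t)^p g(X) dX dt is a Carleson measure on ℝⁿ₊ × ℝ with norm ‖ν‖_C. Define M_{κ x_n²}(f(X, ·))(t) := sup {(1/|I|) ∫_I f(X, s) ds : t ∈ I, |I| < κ x_n²} (localized uncentered maximal function in time at scale κ x_n²). Then the measure dν̃ = M_{κ x_n²}(f(X, ·))(t)^p g(X) dX dt is also a Carleson measure, and ‖ν̃‖_C ≤ C max{1, κ} ‖ν‖_C for a constant C depending only on n and p. -/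
open MeasureTheory Set ENNReal

/-- The localized uncentered maximal function in the time variable at scale `R`,
valued in `ℝ≥0∞`: `sup {(1/|I|) ∫_I f : t ∈ I, |I| < R}`. -/
noncomputable def tMaxE (R : ℝ) (f : ℝ → ℝ) (t : ℝ) : ℝ≥0∞ :=
  ⨆ (c : ℝ) (d : ℝ) (_ : c < d) (_ : d - c < R) (_ : t ∈ Ioo c d),
    ENNReal.ofReal ((d - c)⁻¹) * ∫⁻ s in Ioo c d, ENNReal.ofReal (f s)

/-- The Carleson box `T(Q_r(x₀,t₀))` over a boundary parabolic cube in `ℝⁿ₊ × ℝ`,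
with points written as `(x, xₙ, t)`. -/
def carlesonBox (m : ℕ) (x₀ : Fin m → ℝ) (t₀ r : ℝ) : Set ((Fin m → ℝ) × ℝ × ℝ) :=
  {q | (∀ i, |q.1 i - x₀ i| < r) ∧ 0 < q.2.1 ∧ q.2.1 < r ∧ |q.2.2 - t₀| < r ^ 2}

/-!
For fixed `X = (x, xₙ)` in the box, the maximal function at scale `κ xₙ² ≤ κ r²` on the window
`|t - t₀| < r²` only sees `f(X, ·)` on the window enlarged by `κ r²`. The Hardy–Littlewood maximal
theorem on `ℝ` (weak (1,1) by a Vitali covering, then `Lᵖ` by the layer-cake formula after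
splitting `f` at height `u/2` to estimate `{M f > u}`) bounds the `p`-th power integral of the
maximal function by `C_p` times that of `f(X, ·)` on the enlarged window. Integrating against
`g(X) dX`, the enlarged box is covered by `⌈2 + 2κ⌉ ≤ 5 max{1, κ}` Carleson boxes of the
original size.
-/

open Metric

lemma ofReal_inv_mul_mul_ofReal {u : ℝ} (hu : 0 < u) (a : ℝ≥0∞) :
    ENNReal.ofReal u⁻¹ * (a * ENNReal.ofReal u) = a := by
  rw [mul_comm a, ← mul_assoc, ← ENNReal.ofReal_mul (inv_nonneg.2 hu.le), inv_mul_cancel₀ hu.ne',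
    ENNReal.ofReal_one, one_mul]

lemma lintegral_Ioo_rpow {a r : ℝ} (ha : 0 ≤ a) (hr : -1 < r) :
    ∫⁻ x in Ioo 0 a, ENNReal.ofReal (x ^ r) = ENNReal.ofReal (a ^ (r + 1) / (r + 1)) := by
  have hint : IntegrableOn (fun x : ℝ => x ^ r) (Ioc 0 a) :=
    (intervalIntegral.intervalIntegrable_rpow' hr (a := 0) (b := a)).1
  rw [← ofReal_integral_eq_lintegral_ofReal (hint.mono_set Ioo_subset_Ioc_self)
      ((ae_restrict_iff' measurableSet_Ioo).2 (ae_of_all _ fun x hx => Real.rpow_nonneg hx.1.le r)),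
    ← integral_Ioc_eq_integral_Ioo, ← intervalIntegral.integral_of_le ha,
    integral_rpow (Or.inl hr), Real.zero_rpow (by linarith), sub_zero]

lemma lintegral_Ioi_ite_rpow_mul {p : ℝ} (hp : 1 < p) (a : ℝ) :
    ∫⁻ u in Ioi 0, (if u < 2 * a then ENNReal.ofReal (u ^ (p - 2) * a) else 0) =
      ENNReal.ofReal (2 ^ (p - 1) / (p - 1)) * ENNReal.ofReal a ^ p := by
  rcases le_or_gt a 0 with ha | ha
  · rw [ENNReal.ofReal_of_nonpos ha, ENNReal.zero_rpow_of_pos (by linarith), mul_zero,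
      setLIntegral_congr_fun measurableSet_Ioi fun u (hu : 0 < u) => if_neg (by linarith),
      lintegral_zero]
  · have hind : (fun u => if u < 2 * a then ENNReal.ofReal (u ^ (p - 2) * a) else 0) =
        (Iio (2 * a)).indicator fun u => ENNReal.ofReal (u ^ (p - 2)) * ENNReal.ofReal a := by
      ext u
      by_cases hu : u < 2 * a
      · rw [if_pos hu, indicator_of_mem (show u ∈ Iio (2 * a) from hu)]
        exact ENNReal.ofReal_mul' ha.le
      · rw [if_neg hu, indicator_of_notMem (show u ∉ Iio (2 * a) from hu)]
    rw [hind, setLIntegral_indicator measurableSet_Iio, Iio_inter_Ioi,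
      lintegral_mul_const' _ _ ENNReal.ofReal_ne_top,
      lintegral_Ioo_rpow (by linarith) (by linarith), ENNReal.ofReal_rpow_of_pos ha,
      ← ENNReal.ofReal_mul (div_nonneg (by positivity) (by linarith)),
      ← ENNReal.ofReal_mul (div_nonneg (by positivity) (by linarith))]
    congr 1
    rw [show p - 2 + 1 = p - 1 by ring, Real.mul_rpow (by norm_num) ha.le, Real.rpow_sub_one ha.ne']
    field_simp

lemma mul_volume_le_four_mul_lintegral_of_isCompact {φ : ℝ → ℝ≥0∞} {K : Set ℝ}
    (hK : IsCompact K) {a : ℝ≥0∞}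
    (h : ∀ t ∈ K, ∃ x ρ, t ∈ ball x ρ ∧ a * volume (ball x ρ) ≤ ∫⁻ s in ball x ρ, φ s) :
    a * volume K ≤ 4 * ∫⁻ s, φ s := by
  choose! x ρ hmem hball using h
  obtain ⟨b, hbK, hb, hKb⟩ :=
    hK.elim_finite_subcover_image (fun t _ => isOpen_ball) fun t ht => mem_biUnion ht (hmem t ht)
  obtain ⟨R, hR⟩ := (hb.image ρ).bddAbove
  obtain ⟨u, hub, hdisj, hcover⟩ := Vitali.exists_disjoint_subfamily_covering_enlargement_closedBall
    b x ρ R (fun t ht => hR (mem_image_of_mem ρ ht)) 4 (by norm_num)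
  have hu : u.Finite := hb.subset hub
  calc a * volume K
      ≤ a * ∑ t ∈ hu.toFinset, volume (closedBall (x t) (4 * ρ t)) := by
        gcongr
        refine (measure_mono (hKb.trans (iUnion₂_subset fun t ht => ?_))).trans
          (measure_biUnion_finset_le _ _)
        obtain ⟨t', ht'u, hsub⟩ := hcover t ht
        exact ball_subset_closedBall.trans
          (hsub.trans (subset_biUnion_of_mem (u := fun t => closedBall (x t) (4 * ρ t))
            (hu.mem_toFinset.2 ht'u)))
    _ = 4 * ∑ t ∈ hu.toFinset, a * volume (ball (x t) (ρ t)) := by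
        simp only [Finset.mul_sum, Real.volume_closedBall, Real.volume_ball]
        refine Finset.sum_congr rfl fun t _ => ?_
        rw [show 2 * (4 * ρ t) = 4 * (2 * ρ t) by ring, ENNReal.ofReal_mul (by norm_num),
          ENNReal.ofReal_ofNat]
        ring
    _ ≤ 4 * ∑ t ∈ hu.toFinset, ∫⁻ s in ball (x t) (ρ t), φ s := by
        gcongr with t ht
        exact hball t (hbK (hub (hu.mem_toFinset.1 ht)))
    _ = 4 * ∫⁻ s in ⋃ t ∈ hu.toFinset, ball (x t) (ρ t), φ s := by
        rw [lintegral_biUnion_finset _ (fun _ _ => measurableSet_ball)]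
        rw [hu.coe_toFinset]
        exact hdisj.mono fun t => ball_subset_closedBall
    _ ≤ 4 * ∫⁻ s, φ s := by grw [setLIntegral_le_lintegral]

lemma setLIntegral_prod_le_const_mul {α β : Type*} [MeasurableSpace α] [MeasurableSpace β]
    {μ : Measure α} {ν : Measure β} [SFinite μ] [SFinite ν] {G H : α × β → ℝ≥0∞}
    (hH : Measurable H) {A : Set α} (hA : MeasurableSet A) {V W : Set β} (c : ℝ≥0∞)
    (h : ∀ x ∈ A, ∫⁻ y in V, G (x, y) ∂ν ≤ c * ∫⁻ y in W, H (x, y) ∂ν) :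
    ∫⁻ z in A ×ˢ V, G z ∂μ.prod ν ≤ c * ∫⁻ z in A ×ˢ W, H z ∂μ.prod ν := by
  rw [← Measure.prod_restrict, ← Measure.prod_restrict, lintegral_prod _ hH.aemeasurable,
    ← lintegral_const_mul _ hH.lintegral_prod_right']
  exact (lintegral_prod_le _).trans (setLIntegral_mono' hA h)

section MaximalFunction

variable {R : ℝ} {f g : ℝ → ℝ} {t : ℝ}

lemma le_tMaxE {c d : ℝ} (hcd : c < d) (hR : d - c < R) (ht : t ∈ Ioo c d) :
    ENNReal.ofReal (d - c)⁻¹ * ∫⁻ s in Ioo c d, ENNReal.ofReal (f s) ≤ tMaxE R f t :=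
  le_iSup₂_of_le c d <| le_iSup₂_of_le hcd hR <| le_iSup_of_le ht le_rfl

lemma tMaxE_le {a : ℝ≥0∞}
    (h : ∀ c d, c < d → d - c < R → t ∈ Ioo c d →
      ENNReal.ofReal (d - c)⁻¹ * ∫⁻ s in Ioo c d, ENNReal.ofReal (f s) ≤ a) :
    tMaxE R f t ≤ a :=
  iSup₂_le fun c d => iSup₂_le fun hcd hR => iSup_le fun ht => h c d hcd hR ht

lemma exists_Ioo_of_lt_tMaxE {a : ℝ≥0∞} (h : a < tMaxE R f t) :
    ∃ c d, c < d ∧ d - c < R ∧ t ∈ Ioo c d ∧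
      a < ENNReal.ofReal (d - c)⁻¹ * ∫⁻ s in Ioo c d, ENNReal.ofReal (f s) := by
  simpa only [tMaxE, lt_iSup_iff, exists_prop] using h

lemma lowerSemicontinuous_tMaxE : LowerSemicontinuous (tMaxE R f) := fun t a h => by
  obtain ⟨c, d, hcd, hR, ht, hlt⟩ := exists_Ioo_of_lt_tMaxE h
  filter_upwards [Ioo_mem_nhds ht.1 ht.2] with t' ht' using hlt.trans_le (le_tMaxE hcd hR ht')

lemma measurable_tMaxE : Measurable (tMaxE R f) :=
  lowerSemicontinuous_tMaxE.measurable

lemma tMaxE_congr (h : EqOn f g (Ioo (t - R) (t + R))) : tMaxE R f t = tMaxE R g t := by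
  refine iSup_congr fun c => iSup_congr fun d => iSup_congr fun hcd => iSup_congr fun hR =>
    iSup_congr fun ht => ?_
  rw [setLIntegral_congr_fun measurableSet_Ioo fun s hs => by
    rw [h ⟨by linarith [hs.1, ht.2], by linarith [hs.2, ht.1]⟩]]

lemma tMaxE_le_add_tMaxE_indicator (a : ℝ) :
    tMaxE R f t ≤ ENNReal.ofReal a + tMaxE R ({s | a < f s}.indicator f) t := by
  refine tMaxE_le fun c d hcd hR ht => ?_
  have hsplit : ∀ s, ENNReal.ofReal (f s) ≤
      ENNReal.ofReal a + ENNReal.ofReal ({s | a < f s}.indicator f s) := by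
    intro s
    by_cases hs : a < f s
    · simp [indicator_of_mem (show s ∈ {s | a < f s} from hs)]
    · rw [indicator_of_notMem (show s ∉ {s | a < f s} from hs), ENNReal.ofReal_zero, add_zero]
      exact ENNReal.ofReal_le_ofReal (not_lt.1 hs)
  calc ENNReal.ofReal (d - c)⁻¹ * ∫⁻ s in Ioo c d, ENNReal.ofReal (f s)
      ≤ ENNReal.ofReal (d - c)⁻¹ * ∫⁻ s in Ioo c d,
          (ENNReal.ofReal a + ENNReal.ofReal ({s | a < f s}.indicator f s)) := by
        gcongr with s; exact hsplit s
    _ = ENNReal.ofReal (d - c)⁻¹ * (ENNReal.ofReal a * ENNReal.ofReal (d - c)) +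
          ENNReal.ofReal (d - c)⁻¹ *
            ∫⁻ s in Ioo c d, ENNReal.ofReal ({s | a < f s}.indicator f s) := by
        rw [lintegral_add_left measurable_const, setLIntegral_const, Real.volume_Ioo, mul_add]
    _ ≤ ENNReal.ofReal a + tMaxE R ({s | a < f s}.indicator f) t := by
        rw [ofReal_inv_mul_mul_ofReal (sub_pos.2 hcd)]
        exact add_le_add_right (le_tMaxE hcd hR ht) _

lemma exists_ball_of_lt_tMaxE {a : ℝ≥0∞} (h : a < tMaxE R f t) :
    ∃ x ρ, t ∈ ball x ρ ∧ a * volume (ball x ρ) ≤ ∫⁻ s in ball x ρ, ENNReal.ofReal (f s) := by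
  obtain ⟨c, d, hcd, -, ht, hlt⟩ := exists_Ioo_of_lt_tMaxE h
  refine ⟨(c + d) / 2, (d - c) / 2, ?_⟩
  rw [Real.ball_eq_Ioo, show (c + d) / 2 - (d - c) / 2 = c by ring,
    show (c + d) / 2 + (d - c) / 2 = d by ring, Real.volume_Ioo]
  refine ⟨ht, ?_⟩
  calc a * ENNReal.ofReal (d - c)
      ≤ ENNReal.ofReal (d - c)⁻¹ * (∫⁻ s in Ioo c d, ENNReal.ofReal (f s)) *
          ENNReal.ofReal (d - c) := by gcongr
    _ = ∫⁻ s in Ioo c d, ENNReal.ofReal (f s) := by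
        rw [mul_assoc, ofReal_inv_mul_mul_ofReal (sub_pos.2 hcd)]

theorem mul_volume_lt_tMaxE_le (R : ℝ) (f : ℝ → ℝ) (a : ℝ≥0∞) :
    a * volume {t | a < tMaxE R f t} ≤ 4 * ∫⁻ s, ENNReal.ofReal (f s) := by
  rw [show {t | a < tMaxE R f t} = tMaxE R f ⁻¹' Ioi a from rfl,
    (lowerSemicontinuous_tMaxE.isOpen_preimage a).measure_eq_iSup_isCompact]
  simp only [ENNReal.mul_iSup]
  exact iSup_le fun K => iSup₂_le fun hK hKc =>
    mul_volume_le_four_mul_lintegral_of_isCompact hKc fun t ht => exists_ball_of_lt_tMaxE (hK ht)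

lemma ae_tMaxE_ne_top_of_lintegral_ne_top (hf : ∫⁻ s, ENNReal.ofReal (f s) ≠ ∞) :
    ∀ᵐ t, tMaxE R f t ≠ ∞ := by
  rw [ae_iff]
  simp only [ne_eq, not_not]
  by_contra hne
  obtain ⟨n, hn⟩ :=
    ENNReal.exists_nat_mul_gt hne (ENNReal.mul_ne_top (ENNReal.ofNat_ne_top (n := 4)) hf)
  refine (hn.trans_le ?_).false
  calc (n : ℝ≥0∞) * volume {t | tMaxE R f t = ∞}
      ≤ n * volume {t | (n : ℝ≥0∞) < tMaxE R f t} := by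
        gcongr with t ht
        simp_all
    _ ≤ 4 * ∫⁻ s, ENNReal.ofReal (f s) := mul_volume_lt_tMaxE_le R f n

lemma ae_tMaxE_ne_top {p : ℝ} (hp : 1 ≤ p) (hf : ∫⁻ s, ENNReal.ofReal (f s) ^ p ≠ ∞) :
    ∀ᵐ t, tMaxE R f t ≠ ∞ := by
  have hL1 : ∫⁻ s, ENNReal.ofReal ({s | 1 < f s}.indicator f s) ≤
      ∫⁻ s, ENNReal.ofReal (f s) ^ p := by
    refine lintegral_mono fun s => ?_
    by_cases hs : 1 < f s
    · rw [indicator_of_mem (show s ∈ {s | 1 < f s} from hs)]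
      conv_lhs => rw [← ENNReal.rpow_one (ENNReal.ofReal (f s))]
      exact ENNReal.rpow_le_rpow_of_exponent_le (ENNReal.one_le_ofReal.2 hs.le) hp
    · simp [indicator_of_notMem (show s ∉ {s | 1 < f s} from hs)]
  filter_upwards [ae_tMaxE_ne_top_of_lintegral_ne_top (R := R) (ne_top_of_le_ne_top hf hL1)]
    with t ht
  refine ne_top_of_le_ne_top ?_ (tMaxE_le_add_tMaxE_indicator 1)
  simpa using ht

lemma volume_lt_toReal_tMaxE_mul_le {p u : ℝ} (hu : 0 < u) :
    volume {t | u < (tMaxE R f t).toReal} * ENNReal.ofReal (u ^ (p - 1)) ≤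
      8 * ∫⁻ s, if u < 2 * f s then ENNReal.ofReal (u ^ (p - 2) * f s) else 0 := by
  set f' := {s | u / 2 < f s}.indicator f
  have hsub : {t | u < (tMaxE R f t).toReal} ⊆ {t | ENNReal.ofReal (u / 2) < tMaxE R f' t} := by
    intro t ht
    have hne : tMaxE R f t ≠ ∞ := fun h => by simp [h] at ht; linarith
    refine (ENNReal.add_lt_add_iff_left (ENNReal.ofReal_ne_top (r := u / 2))).1 ?_
    calc ENNReal.ofReal (u / 2) + ENNReal.ofReal (u / 2) = ENNReal.ofReal u := by
          rw [← ENNReal.ofReal_add (by positivity) (by positivity), add_halves]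
      _ < tMaxE R f t := (ENNReal.ofReal_lt_iff_lt_toReal hu.le hne).2 ht
      _ ≤ ENNReal.ofReal (u / 2) + tMaxE R f' t := tMaxE_le_add_tMaxE_indicator _
  have hpow : ENNReal.ofReal (u ^ (p - 1)) =
      ENNReal.ofReal (u / 2) * (2 * ENNReal.ofReal (u ^ (p - 2))) := by
    rw [← ENNReal.ofReal_ofNat 2, ← ENNReal.ofReal_mul (by norm_num),
      ← ENNReal.ofReal_mul (by positivity), show p - 1 = p - 2 + 1 by ring,
      Real.rpow_add_one hu.ne']
    ring_nf
  calc volume {t | u < (tMaxE R f t).toReal} * ENNReal.ofReal (u ^ (p - 1))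
      = ENNReal.ofReal (u / 2) * volume {t | u < (tMaxE R f t).toReal} *
          (2 * ENNReal.ofReal (u ^ (p - 2))) := by rw [hpow]; ring
    _ ≤ ENNReal.ofReal (u / 2) * volume {t | ENNReal.ofReal (u / 2) < tMaxE R f' t} *
          (2 * ENNReal.ofReal (u ^ (p - 2))) := by gcongr
    _ ≤ (4 * ∫⁻ s, ENNReal.ofReal (f' s)) * (2 * ENNReal.ofReal (u ^ (p - 2))) := by
        gcongr ?_ * _; exact mul_volume_lt_tMaxE_le R f' _
    _ = 8 * ∫⁻ s, ENNReal.ofReal (f' s) * ENNReal.ofReal (u ^ (p - 2)) := by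
        rw [lintegral_mul_const' _ _ (by finiteness)]; ring
    _ = 8 * ∫⁻ s, if u < 2 * f s then ENNReal.ofReal (u ^ (p - 2) * f s) else 0 := by
        congr 1
        refine lintegral_congr fun s => ?_
        by_cases hs : u / 2 < f s
        · have hf's : f' s = f s := indicator_of_mem (show s ∈ {s | u / 2 < f s} from hs) f
          rw [if_pos (by linarith), hf's, mul_comm, ENNReal.ofReal_mul (by positivity)]
        · have hf's : f' s = 0 := indicator_of_notMem (show s ∉ {s | u / 2 < f s} from hs) f
          rw [if_neg (by linarith), hf's, ENNReal.ofReal_zero, zero_mul]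

theorem lintegral_tMaxE_rpow_le {p : ℝ} (hp : 1 < p) (R : ℝ) (hf : Measurable f) :
    ∫⁻ t, tMaxE R f t ^ p ≤
      ENNReal.ofReal (8 * p * 2 ^ (p - 1) / (p - 1)) * ∫⁻ s, ENNReal.ofReal (f s) ^ p := by
  have hC : 0 < 8 * p * 2 ^ (p - 1) / (p - 1) := div_pos (by positivity) (by linarith)
  by_cases hfp : ∫⁻ s, ENNReal.ofReal (f s) ^ p = ∞
  · rw [hfp, ENNReal.mul_top (ENNReal.ofReal_pos.2 hC).ne']
    exact le_top
  set k : ℝ → ℝ → ℝ≥0∞ := fun u s =>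
    if u < 2 * f s then ENNReal.ofReal (u ^ (p - 2) * f s) else 0
  have hk : Measurable (Function.uncurry k) :=
    Measurable.ite (measurableSet_lt measurable_fst (by fun_prop)) (by fun_prop) measurable_const
  -- `toReal` sends `∞` to `0`, so the layer-cake formula needs `tMaxE R f < ∞` a.e.
  calc ∫⁻ t, tMaxE R f t ^ p
      = ∫⁻ t, ENNReal.ofReal ((tMaxE R f t).toReal ^ p) := by
        refine lintegral_congr_ae ?_
        filter_upwards [ae_tMaxE_ne_top hp.le hfp] with t ht
        rw [← ENNReal.ofReal_rpow_of_nonneg ENNReal.toReal_nonneg (by linarith),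
          ENNReal.ofReal_toReal ht]
    _ = ENNReal.ofReal p * ∫⁻ u in Ioi 0,
          volume {t | u < (tMaxE R f t).toReal} * ENNReal.ofReal (u ^ (p - 1)) :=
        lintegral_rpow_eq_lintegral_meas_lt_mul _ (ae_of_all _ fun t => ENNReal.toReal_nonneg)
          measurable_tMaxE.ennreal_toReal.aemeasurable (by linarith)
    _ ≤ ENNReal.ofReal p * ∫⁻ u in Ioi 0, 8 * ∫⁻ s, k u s := by
        gcongr _ * ?_
        exact setLIntegral_mono' measurableSet_Ioi fun u (hu : 0 < u) =>
          volume_lt_toReal_tMaxE_mul_le (R := R) (f := f) (p := p) hu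
    _ = ENNReal.ofReal p * 8 * ∫⁻ s, ∫⁻ u in Ioi 0, k u s := by
        rw [lintegral_const_mul' _ _ (by finiteness), lintegral_lintegral_swap hk.aemeasurable,
          mul_assoc]
    _ = ENNReal.ofReal p * 8 *
          ∫⁻ s, ENNReal.ofReal (2 ^ (p - 1) / (p - 1)) * ENNReal.ofReal (f s) ^ p := by
        simp only [k, lintegral_Ioi_ite_rpow_mul hp]
    _ = ENNReal.ofReal (8 * p * 2 ^ (p - 1) / (p - 1)) * ∫⁻ s, ENNReal.ofReal (f s) ^ p := by
        rw [lintegral_const_mul' _ _ ENNReal.ofReal_ne_top, ← mul_assoc, ← ENNReal.ofReal_ofNat 8,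
          ← ENNReal.ofReal_mul (by linarith),
          ← ENNReal.ofReal_mul (by positivity), mul_div_assoc, mul_comm p 8]

theorem setLIntegral_Ioo_tMaxE_rpow_le {p : ℝ} (hp : 1 < p) (hf : Measurable f) {δ a b : ℝ}
    (hR : R ≤ δ) :
    ∫⁻ t in Ioo a b, tMaxE R f t ^ p ≤ ENNReal.ofReal (8 * p * 2 ^ (p - 1) / (p - 1)) *
      ∫⁻ s in Ioo (a - δ) (b + δ), ENNReal.ofReal (f s) ^ p := by
  set E := Ioo (a - δ) (b + δ)
  have hloc : ∀ t ∈ Ioo a b, tMaxE R (E.indicator f) t = tMaxE R f t := fun t ht =>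
    tMaxE_congr fun s hs =>
      indicator_of_mem (show s ∈ E from ⟨by linarith [hs.1, ht.1], by linarith [hs.2, ht.2]⟩) f
  have hpow : ∀ s, ENNReal.ofReal (E.indicator f s) ^ p =
      E.indicator (fun s => ENNReal.ofReal (f s) ^ p) s := by
    intro s
    by_cases hs : s ∈ E
    · rw [indicator_of_mem hs, indicator_of_mem hs]
    · rw [indicator_of_notMem hs, indicator_of_notMem hs, ENNReal.ofReal_zero,
        ENNReal.zero_rpow_of_pos (by linarith)]
  calc ∫⁻ t in Ioo a b, tMaxE R f t ^ p
      = ∫⁻ t in Ioo a b, tMaxE R (E.indicator f) t ^ p :=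
        setLIntegral_congr_fun measurableSet_Ioo fun t ht => by rw [hloc t ht]
    _ ≤ ∫⁻ t, tMaxE R (E.indicator f) t ^ p := setLIntegral_le_lintegral _ _
    _ ≤ ENNReal.ofReal (8 * p * 2 ^ (p - 1) / (p - 1)) *
          ∫⁻ s, ENNReal.ofReal (E.indicator f s) ^ p :=
        lintegral_tMaxE_rpow_le hp R (hf.indicator measurableSet_Ioo)
    _ = ENNReal.ofReal (8 * p * 2 ^ (p - 1) / (p - 1)) * ∫⁻ s in E, ENNReal.ofReal (f s) ^ p := by
        simp only [hpow]
        rw [lintegral_indicator measurableSet_Ioo]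

theorem setLIntegral_Ioo_tMaxE_rpow_mul_le {p : ℝ} (hp : 1 < p) (hf : Measurable f)
    (hf0 : ∀ s, 0 ≤ f s) {δ a b : ℝ} (hR : R ≤ δ) (w : ℝ) :
    ∫⁻ t in Ioo a b, tMaxE R f t ^ p * ENNReal.ofReal w ≤
      ENNReal.ofReal (8 * p * 2 ^ (p - 1) / (p - 1)) *
        ∫⁻ s in Ioo (a - δ) (b + δ), ENNReal.ofReal (f s ^ p) * ENNReal.ofReal w := by
  rw [lintegral_mul_const' _ _ ENNReal.ofReal_ne_top,
    lintegral_mul_const' _ _ ENNReal.ofReal_ne_top, ← mul_assoc]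
  gcongr ?_ * _
  simp only [← ENNReal.ofReal_rpow_of_nonneg (hf0 _) (by linarith : 0 ≤ p)]
  exact setLIntegral_Ioo_tMaxE_rpow_le hp hf hR

end MaximalFunction

lemma carlesonBox_eq_prod {m : ℕ} (x₀ : Fin m → ℝ) (t₀ : ℝ) {r : ℝ} (hr : 0 < r) :
    carlesonBox m x₀ t₀ r = ball x₀ r ×ˢ (Ioo 0 r ×ˢ Ioo (t₀ - r ^ 2) (t₀ + r ^ 2)) := by
  ext ⟨x, y, t⟩
  simp [carlesonBox, dist_pi_lt_iff hr, Real.dist_eq, abs_lt, and_assoc]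
  exact fun _ _ _ => ⟨fun h => ⟨by linarith, by linarith⟩, fun h => ⟨by linarith, by linarith⟩⟩

lemma Ioo_subset_iUnion_Ioo {a b h : ℝ} (hh : 0 < h) {N : ℕ} (hN : b - a ≤ N * h) :
    Ioo a b ⊆ ⋃ k : Fin N, Ioo (a + k * h - h) (a + k * h + h) := by
  intro t ht
  have hy : 0 ≤ (t - a) / h := div_nonneg (by linarith [ht.1]) hh.le
  have hk : ⌊(t - a) / h⌋₊ < N := by
    have : (⌊(t - a) / h⌋₊ : ℝ) < N :=
      (Nat.floor_le hy).trans_lt ((div_lt_iff₀ hh).2 (by linarith [ht.2]))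
    exact_mod_cast this
  have h1 := (le_div_iff₀ hh).1 (Nat.floor_le hy)
  have h2 := (div_lt_iff₀ hh).1 (Nat.lt_floor_add_one ((t - a) / h))
  exact mem_iUnion.2 ⟨⟨_, hk⟩, by constructor <;> simp only <;> nlinarith⟩

lemma setLIntegral_ball_prod_Ioo_le {m : ℕ} {H : (Fin m → ℝ) × ℝ × ℝ → ℝ≥0∞}
    {x₀ : Fin m → ℝ} {r : ℝ} (hr : 0 < r) {B : ℝ≥0∞}
    (hB : ∀ t₀, ∫⁻ q in carlesonBox m x₀ t₀ r, H q ≤ B) {a b : ℝ} {N : ℕ}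
    (hN : b - a ≤ N * r ^ 2) :
    ∫⁻ q in ball x₀ r ×ˢ (Ioo 0 r ×ˢ Ioo a b), H q ≤ N * B := by
  calc ∫⁻ q in ball x₀ r ×ˢ (Ioo 0 r ×ˢ Ioo a b), H q
      ≤ ∫⁻ q in ⋃ k : Fin N, carlesonBox m x₀ (a + k * r ^ 2) r, H q := by
        refine lintegral_mono_set fun ⟨x, y, t⟩ ⟨hx, hy, ht⟩ => ?_
        obtain ⟨k, hk⟩ := mem_iUnion.1 (Ioo_subset_iUnion_Ioo (pow_pos hr 2) hN ht)
        exact mem_iUnion.2 ⟨k, by rw [carlesonBox_eq_prod _ _ hr]; exact ⟨hx, hy, hk⟩⟩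
    _ ≤ ∑' k : Fin N, ∫⁻ q in carlesonBox m x₀ (a + k * r ^ 2) r, H q :=
        lintegral_iUnion_le _ _
    _ ≤ ∑' _ : Fin N, B := ENNReal.tsum_le_tsum fun k => hB _
    _ = N * B := by simp

theorem stmt5_general (n : ℕ) (p : ℝ) (hp : 1 < p) :
    ∃ C : ℝ, 0 < C ∧
      ∀ (κ : ℝ), 0 < κ →
      ∀ (f : (Fin (n - 1) → ℝ) × ℝ × ℝ → ℝ) (g : (Fin (n - 1) → ℝ) × ℝ → ℝ),
        Measurable f → Measurable g → (∀ q, 0 ≤ f q) → (∀ X, 0 ≤ g X) →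
      ∀ (M : ℝ), 0 ≤ M →
        (∀ (x₀ : Fin (n - 1) → ℝ) (t₀ r : ℝ), 0 < r →
          ∫⁻ q in carlesonBox (n - 1) x₀ t₀ r,
              ENNReal.ofReal (f q ^ p) * ENNReal.ofReal (g (q.1, q.2.1)) ≤
            ENNReal.ofReal (M * r ^ (n + 1))) →
        ∀ (x₀ : Fin (n - 1) → ℝ) (t₀ r : ℝ), 0 < r →
          ∫⁻ q in carlesonBox (n - 1) x₀ t₀ r,
              (tMaxE (κ * q.2.1 ^ 2) (fun s => f (q.1, q.2.1, s)) q.2.2) ^ p *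
                ENNReal.ofReal (g (q.1, q.2.1)) ≤
            ENNReal.ofReal (C * max 1 κ * M * r ^ (n + 1)) := by
  set C₀ := 8 * p * 2 ^ (p - 1) / (p - 1)
  have hC₀ : 0 < C₀ := div_pos (by positivity) (by linarith)
  refine ⟨5 * C₀, by positivity, ?_⟩
  intro κ hκ f g hf hg hf0 _ M _ hcarl x₀ t₀ r hr
  have hH : Measurable fun q : (Fin (n - 1) → ℝ) × ℝ × ℝ =>
      ENNReal.ofReal (f q ^ p) * ENNReal.ofReal (g (q.1, q.2.1)) := by fun_prop
  set N := ⌈2 + 2 * κ⌉₊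
  have hN : (N : ℝ) ≤ 5 * max 1 κ := by
    linarith [Nat.ceil_lt_add_one (by positivity : (0 : ℝ) ≤ 2 + 2 * κ), le_max_left 1 κ,
      le_max_right 1 κ]
  calc _ ≤ ENNReal.ofReal C₀ * ∫⁻ q in ball x₀ r ×ˢ
          (Ioo 0 r ×ˢ Ioo (t₀ - r ^ 2 - κ * r ^ 2) (t₀ + r ^ 2 + κ * r ^ 2)),
            ENNReal.ofReal (f q ^ p) * ENNReal.ofReal (g (q.1, q.2.1)) := by
        rw [carlesonBox_eq_prod x₀ t₀ hr]
        refine setLIntegral_prod_le_const_mul hH measurableSet_ball _ fun x _ =>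
          setLIntegral_prod_le_const_mul (hH.comp measurable_prodMk_left) measurableSet_Ioo _
            fun xn hxn => ?_
        exact setLIntegral_Ioo_tMaxE_rpow_mul_le (f := fun s => f (x, xn, s))
          (a := t₀ - r ^ 2) (b := t₀ + r ^ 2) hp (by fun_prop) (fun s => hf0 _)
          (mul_le_mul_of_nonneg_left (pow_le_pow_left₀ hxn.1.le hxn.2.le 2) hκ.le) (g (x, xn))
    _ ≤ ENNReal.ofReal C₀ * (N * ENNReal.ofReal (M * r ^ (n + 1))) := by
        gcongr _ * ?_
        exact setLIntegral_ball_prod_Ioo_le hr (fun t₀ => hcarl x₀ t₀ r hr)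
          (by nlinarith [Nat.le_ceil (2 + 2 * κ)])
    _ ≤ ENNReal.ofReal (5 * C₀ * max 1 κ * M * r ^ (n + 1)) := by
        rw [mul_assoc (5 * C₀ * max 1 κ),
          ENNReal.ofReal_mul (p := 5 * C₀ * max 1 κ) (by positivity), ← mul_assoc,
          ← ENNReal.ofReal_natCast, ← ENNReal.ofReal_mul (by positivity)]
        gcongr ENNReal.ofReal ?_ * _
        nlinarith

/-- if `dν = f^p g dX dt` is a Carleson measure with norm at most `M`, then
`dν̃ = M_{κ xₙ²}(f(X,·))(t)^p g(X) dX dt` is a Carleson measure with norm at most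
`C max{1,κ} M`, where `C = C(n,p)`. -/
theorem stmt5 (n : ℕ) (hn : 2 ≤ n) (p : ℝ) (hp : 1 < p) :
    ∃ C : ℝ, 0 < C ∧
      ∀ (κ : ℝ), 0 < κ →
      ∀ (f : (Fin (n - 1) → ℝ) × ℝ × ℝ → ℝ) (g : (Fin (n - 1) → ℝ) × ℝ → ℝ),
        Measurable f → Measurable g → (∀ q, 0 ≤ f q) → (∀ X, 0 ≤ g X) →
      ∀ (M : ℝ), 0 ≤ M →
        (∀ (x₀ : Fin (n - 1) → ℝ) (t₀ r : ℝ), 0 < r →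
          ∫⁻ q in carlesonBox (n - 1) x₀ t₀ r,
              ENNReal.ofReal (f q ^ p) * ENNReal.ofReal (g (q.1, q.2.1)) ≤
            ENNReal.ofReal (M * r ^ (n + 1))) →
        ∀ (x₀ : Fin (n - 1) → ℝ) (t₀ r : ℝ), 0 < r →
          ∫⁻ q in carlesonBox (n - 1) x₀ t₀ r,
              (tMaxE (κ * q.2.1 ^ 2) (fun s => f (q.1, q.2.1, s)) q.2.2) ^ p *
                ENNReal.ofReal (g (q.1, q.2.1)) ≤
            ENNReal.ofReal (C * max 1 κ * M * r ^ (n + 1)) :=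
  stmt5_general n p hp
end

section
/- Let (X, μ) be a measure space, p ∈ (0, ∞), and let f, g : X → [0, ∞) be measurable with ∫ f^p dμ < ∞. Suppose there are constants C > 0 and γ > 0 with 2^p C γ² ≤ 1/2 such that for every ν > 0, μ({f > ν} ∩ {g ≤ γν}) ≤ C γ² μ({f > ν/2}). Then ∫ f^p dμ ≤ 2 γ^{-p} ∫ g^p dμ. -/
/-!
By the layer-cake formula, `∫ f^p` is a weighted integral of `ν ↦ μ {f > ν}`. Splitting
`{f > ν}` along `{g ≤ γν}` and using the hypothesis bounds this distribution function by
`Cγ² μ {2f > ν} + μ {g/γ > ν}`, so `∫ f^p ≤ 2^p C γ² ∫ f^p + γ^{-p} ∫ g^p`. Since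
`2^p C γ² ≤ 1/2` and `∫ f^p < ∞`, the first term is absorbed into the left-hand side.
-/

open MeasureTheory Set
open scoped ENNReal

namespace ENNReal

theorem le_two_mul_of_le_mul_add {a b c : ℝ≥0∞} (ha : a ≠ ⊤) (hc : c ≤ 2⁻¹)
    (h : a ≤ c * a + b) : a ≤ 2 * b := by
  have h' : a ≤ a / 2 + b := by
    calc a ≤ c * a + b := h
      _ ≤ 2⁻¹ * a + b := by gcongr
      _ = a / 2 + b := by rw [ENNReal.div_eq_inv_mul]
  have hhalf : a / 2 ≤ b := by
    rw [← ENNReal.sub_half ha]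
    exact tsub_le_iff_left.mpr h'
  calc a = a / 2 + a / 2 := (ENNReal.add_halves a).symm
    _ ≤ b + b := add_le_add hhalf hhalf
    _ = 2 * b := (two_mul b).symm

end ENNReal

section LayerCake

variable {X : Type*} [MeasurableSpace X] {μ : Measure X}

theorem lintegral_ofReal_const_mul_rpow {a p : ℝ} (ha : 0 ≤ a) {h : X → ℝ}
    (hh : ∀ x, 0 ≤ h x) :
    ∫⁻ x, ENNReal.ofReal ((a * h x) ^ p) ∂μ =
      ENNReal.ofReal (a ^ p) * ∫⁻ x, ENNReal.ofReal (h x ^ p) ∂μ := by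
  rw [← lintegral_const_mul' _ _ ENNReal.ofReal_ne_top]
  refine lintegral_congr fun x => ?_
  rw [Real.mul_rpow ha (hh x), ENNReal.ofReal_mul (Real.rpow_nonneg ha p)]

theorem lintegral_rpow_le_of_meas_lt_le {p : ℝ} (hp : 0 < p) {f F G : X → ℝ}
    (hf0 : 0 ≤ᵐ[μ] f) (hF0 : 0 ≤ᵐ[μ] F) (hG0 : 0 ≤ᵐ[μ] G)
    (hf : AEMeasurable f μ) (hF : AEMeasurable F μ) (hG : AEMeasurable G μ) (c : ℝ≥0∞)
    (hdist : ∀ t : ℝ, 0 < t → μ {x | t < f x} ≤ c * μ {x | t < F x} + μ {x | t < G x}) :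
    ∫⁻ x, ENNReal.ofReal (f x ^ p) ∂μ ≤
      c * ∫⁻ x, ENNReal.ofReal (F x ^ p) ∂μ + ∫⁻ x, ENNReal.ofReal (G x ^ p) ∂μ := by
  rw [lintegral_rpow_eq_lintegral_meas_lt_mul μ hf0 hf hp,
    lintegral_rpow_eq_lintegral_meas_lt_mul μ hF0 hF hp,
    lintegral_rpow_eq_lintegral_meas_lt_mul μ hG0 hG hp]
  have hFdist : Measurable fun t : ℝ => μ {x | t < F x} :=
    Antitone.measurable fun s t hst => measure_mono fun x hx => hst.trans_lt hx
  have hFw : Measurable fun t : ℝ => μ {x | t < F x} * ENNReal.ofReal (t ^ (p - 1)) :=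
    hFdist.mul (by fun_prop)
  calc ENNReal.ofReal p * ∫⁻ t in Ioi 0, μ {x | t < f x} * ENNReal.ofReal (t ^ (p - 1))
      ≤ ENNReal.ofReal p * ∫⁻ t in Ioi 0, (c * (μ {x | t < F x} * ENNReal.ofReal (t ^ (p - 1)))
          + μ {x | t < G x} * ENNReal.ofReal (t ^ (p - 1))) := by
        refine mul_le_mul_right (setLIntegral_mono' measurableSet_Ioi fun t ht => ?_) _
        rw [← mul_assoc, ← add_mul]
        exact mul_le_mul_left (hdist t ht) _
    _ = c * (ENNReal.ofReal p * ∫⁻ t in Ioi 0, μ {x | t < F x} * ENNReal.ofReal (t ^ (p - 1)))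
          + ENNReal.ofReal p * ∫⁻ t in Ioi 0, μ {x | t < G x} * ENNReal.ofReal (t ^ (p - 1)) := by
        rw [lintegral_add_left (hFw.const_mul c), lintegral_const_mul c hFw]
        ring

end LayerCake

theorem measure_lt_le_measure_inter_add {X : Type*} [MeasurableSpace X] (μ : Measure X)
    (f g : X → ℝ) (t s : ℝ) :
    μ {x | t < f x} ≤ μ ({x | t < f x} ∩ {x | g x ≤ s}) + μ {x | s < g x} := by
  refine (measure_mono fun x hx => ?_).trans (measure_union_le _ _)
  by_cases hgx : g x ≤ s
  · exact Or.inl ⟨hx, hgx⟩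
  · exact Or.inr (not_le.mp hgx)

theorem stmt9_general {X : Type*} [MeasurableSpace X] (μ : Measure X) (p : ℝ) (hp : 0 < p)
    (f g : X → ℝ) (hf : Measurable f) (hg : Measurable g)
    (hf0 : ∀ x, 0 ≤ f x) (hg0 : ∀ x, 0 ≤ g x)
    (hfin : ∫⁻ x, ENNReal.ofReal (f x ^ p) ∂μ < ⊤)
    (C γ : ℝ) (hγ : 0 < γ) (hsmall : 2 ^ p * C * γ ^ 2 ≤ 1 / 2)
    (hgl : ∀ ν : ℝ, 0 < ν →
      μ ({x | ν < f x} ∩ {x | g x ≤ γ * ν}) ≤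
        ENNReal.ofReal (C * γ ^ 2) * μ {x | ν / 2 < f x}) :
    ∫⁻ x, ENNReal.ofReal (f x ^ p) ∂μ ≤
      ENNReal.ofReal (2 * γ ^ (-p)) * ∫⁻ x, ENNReal.ofReal (g x ^ p) ∂μ := by
  have hdist (t : ℝ) (ht : 0 < t) : μ {x | t < f x} ≤
      ENNReal.ofReal (C * γ ^ 2) * μ {x | t < 2 * f x} + μ {x | t < γ⁻¹ * g x} := by
    have hF : {x | t / 2 < f x} = {x | t < 2 * f x} := by
      ext x; exact div_lt_iff₀' (two_pos : (0 : ℝ) < 2)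
    have hG : {x | γ * t < g x} = {x | t < γ⁻¹ * g x} := by
      ext x; exact (lt_inv_mul_iff₀ hγ).symm
    calc μ {x | t < f x} ≤ μ ({x | t < f x} ∩ {x | g x ≤ γ * t}) + μ {x | γ * t < g x} :=
          measure_lt_le_measure_inter_add μ f g t (γ * t)
      _ ≤ _ := by rw [← hF, ← hG]; gcongr; exact hgl t ht
  have hLp := lintegral_rpow_le_of_meas_lt_le hp (.of_forall hf0)
    (.of_forall fun x => mul_nonneg zero_le_two (hf0 x))
    (.of_forall fun x => mul_nonneg (inv_nonneg.mpr hγ.le) (hg0 x)) hf.aemeasurable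
    (hf.aemeasurable.const_mul 2) (hg.aemeasurable.const_mul γ⁻¹) _ hdist
  rw [lintegral_ofReal_const_mul_rpow zero_le_two hf0,
    lintegral_ofReal_const_mul_rpow (inv_nonneg.mpr hγ.le) hg0,
    Real.inv_rpow hγ.le, ← Real.rpow_neg hγ.le, ← mul_assoc,
    ← ENNReal.ofReal_mul' (Real.rpow_nonneg zero_le_two p)] at hLp
  have hCγ : ENNReal.ofReal (C * γ ^ 2 * 2 ^ p) ≤ 2⁻¹ := by
    rw [← ENNReal.ofReal_ofNat 2, ← ENNReal.ofReal_inv_of_pos two_pos]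
    exact ENNReal.ofReal_le_ofReal (by linarith)
  rw [ENNReal.ofReal_mul zero_le_two, ENNReal.ofReal_ofNat, mul_assoc]
  exact ENNReal.le_two_mul_of_le_mul_add hfin.ne hCγ hLp

/-- abstract good-λ argument. If `μ({f > ν} ∩ {g ≤ γν}) ≤ Cγ² μ({f > ν/2})`
for all `ν > 0` and `2^p C γ² ≤ 1/2`, and `∫ f^p dμ < ∞`, then
`∫ f^p dμ ≤ 2 γ^{-p} ∫ g^p dμ`. -/
theorem stmt9 {X : Type*} [MeasurableSpace X] (μ : Measure X) (p : ℝ) (hp : 0 < p)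
    (f g : X → ℝ) (hf : Measurable f) (hg : Measurable g)
    (hf0 : ∀ x, 0 ≤ f x) (hg0 : ∀ x, 0 ≤ g x)
    (hfin : ∫⁻ x, ENNReal.ofReal (f x ^ p) ∂μ < ⊤)
    (C γ : ℝ) (hC : 0 < C) (hγ : 0 < γ) (hsmall : 2 ^ p * C * γ ^ 2 ≤ 1 / 2)
    (hgl : ∀ ν : ℝ, 0 < ν →
      μ ({x | ν < f x} ∩ {x | g x ≤ γ * ν}) ≤
        ENNReal.ofReal (C * γ ^ 2) * μ {x | ν / 2 < f x}) :
    ∫⁻ x, ENNReal.ofReal (f x ^ p) ∂μ ≤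
      ENNReal.ofReal (2 * γ ^ (-p)) * ∫⁻ x, ENNReal.ofReal (g x ^ p) ∂μ :=
  stmt9_general μ p hp f g hf hg hf0 hg0 hfin C γ hγ hsmall hgl
end
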